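/- The labelling f of Theorem 1 is a graceful labelling of the rooted symmetric tree: f is a bijection onto {0,...,h_1 - 1} and the induced edge labels |f(parent) - f(child)| over all edges are pairwise distinct, hence equal to {1,...,h_1 - 1}. -/

import Mathlib

/-- The labelling of Theorem 1 (Rofa 2021). A vertex at level `r = x.length + 1` of a
rooted symmetric tree with daughter degree sequence `k 1, ..., k (q-1)` and level numbers
`h` is identified with its sequence of edge indices `x = (x 1, ..., x (r-1))`, the entry
`x i` being `x.getD (i-1) 0`. Its label is
`x 1 * h 2 + x 2 * h 3 + ⋯ + x (r-1) * h r + (r-1)/2` if `r` is odd, and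
`(k 1 - x 1) * h 2 - x 2 * h 3 - ⋯ - x (r-1) * h r - (r-2)/2` if `r` is even. -/
def rofaLabel (k h : ℕ → ℕ) (x : List ℕ) : ℤ :=
  if (x.length + 1) % 2 = 1 then
    (∑ i ∈ Finset.range x.length, (x.getD i 0 : ℤ) * (h (i + 2) : ℤ)) +
      ((x.length / 2 : ℕ) : ℤ)
  else
    ((k 1 : ℤ) - (x.getD 0 0 : ℤ)) * (h 2 : ℤ) -
      (∑ i ∈ Finset.Icc 1 (x.length - 1), (x.getD i 0 : ℤ) * (h (i + 2) : ℤ)) -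
      (((x.length - 1) / 2 : ℕ) : ℤ)

/-- `x` is a valid index sequence for a vertex of the rooted symmetric tree with `q`
levels and daughter degree sequence `k 1, ..., k (q-1)`: it has length at most `q - 1`
and its `i`-th entry (the edge index `x i`, 1-based) is less than `k i`. -/
def ValidIdx (q : ℕ) (k : ℕ → ℕ) (x : List ℕ) : Prop :=
  x.length ≤ q - 1 ∧ ∀ i < x.length, x.getD i 0 < k (i + 1)

/-!
Deleting the root of the tree leaves `k 1` copies of the tree with degree sequence
`k 2, …, k (q-1)`, and the label of the vertex `a :: y` is `B * h 2 - f' y`, where `f'` is the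
labelling of the subtree and `B ∈ [1, k 1]` is `k 1 - a` or `a + 1` according to the parity
of the length of `y`. Writing labels in this mixed radix shows by induction that `f` is a
bijection onto `[0, h 1)`.

The root edges get the labels `(k 1 - j) * h 2`, the multiples of `h 2`. The edge from `a :: y`
to `a :: y ++ [j]` gets `|c * h 2 - d|`, where `d` is the signed label of the edge from `y` to
`y ++ [j]` in the subtree, so `0 < |d| < h 2`, and `c ≡ k 1 + 1 (mod 2)`, `|c| < k 1`. Hence these
labels are not multiples of `h 2`, the parity of `c` makes them pairwise distinct, and all of them
lie in `[1, h 1 - 1]`. As the tree has `h 1 - 1` edges, the edge labels fill that interval.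
-/

open Set

section IntArith

variable {H B B' c c₁ c₂ d d₁ d₂ t t' : ℤ}

theorem exists_eq_mul_sub (hH : 0 < H) (v : ℤ) : ∃ B t, v = B * H - t ∧ t ∈ Ico 0 H :=
  ⟨-((-v) / H), (-v) % H, by linarith [Int.mul_ediv_add_emod (-v) H],
    Int.emod_nonneg _ hH.ne', Int.emod_lt_of_pos _ hH⟩

theorem eq_of_mul_sub_eq (ht : t ∈ Ico 0 H) (ht' : t' ∈ Ico 0 H)
    (h : B * H - t = B' * H - t') : B = B' ∧ t = t' := by
  obtain ⟨ht0, htH⟩ := ht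
  obtain ⟨ht0', htH'⟩ := ht'
  have htt : t - t' = 0 :=
    Int.eq_zero_of_abs_lt_dvd (m := H) ⟨B - B', by linarith⟩
      (abs_sub_lt_iff.mpr ⟨by omega, by omega⟩)
  exact ⟨mul_right_cancel₀ (by omega : H ≠ 0) (by linarith), by omega⟩

theorem not_dvd_mul_sub (hd : 0 < |d|) (hdH : |d| < H) : ¬H ∣ c * H - d := by
  intro hdvd
  have hHd : H ∣ d := by simpa using dvd_sub (dvd_mul_left H c) hdvd
  exact hd.ne' (abs_eq_zero.mpr (Int.eq_zero_of_abs_lt_dvd hHd hdH))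

theorem eq_zero_of_even_mul_eq {m e : ℤ} (hm : Even m) (hH : 0 < H) (he : |e| < 2 * H)
    (h : m * H = e) : m = 0 ∧ e = 0 := by
  obtain ⟨r, rfl⟩ := hm
  obtain rfl : e = 0 := Int.eq_zero_of_abs_lt_dvd ⟨r, by linarith⟩ he
  exact ⟨(mul_eq_zero.mp h).resolve_right hH.ne', rfl⟩

theorem eq_or_eq_neg_of_abs_mul_sub_eq (hc : Even (c₁ - c₂)) (hd₁ : |d₁| < H)
    (hd₂ : |d₂| < H) (h : |c₁ * H - d₁| = |c₂ * H - d₂|) :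
    (c₁ = c₂ ∧ d₁ = d₂) ∨ (c₁ = -c₂ ∧ d₁ = -d₂) := by
  have hH : 0 < H := (abs_nonneg d₁).trans_lt hd₁
  rw [abs_lt] at hd₁ hd₂
  rcases abs_eq_abs.mp h with h | h
  · obtain ⟨hc, hd⟩ := eq_zero_of_even_mul_eq (e := d₁ - d₂) hc hH
      (abs_lt.mpr ⟨by linarith, by linarith⟩) (by linarith)
    exact Or.inl ⟨by linarith, by linarith⟩
  · have hc' : Even (c₁ + c₂) := by
      simpa [sub_add_cancel, two_mul, add_assoc] using hc.add (even_two_mul c₂)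
    obtain ⟨hc, hd⟩ := eq_zero_of_even_mul_eq (e := d₁ + d₂) hc' hH
      (abs_lt.mpr ⟨by linarith, by linarith⟩) (by linarith)
    exact Or.inr ⟨by linarith, by linarith⟩

end IntArith

theorem List.append_singleton_injective {α : Type*} :
    Function.Injective fun e : List α × α => e.1 ++ [e.2] := by
  rintro ⟨x, j⟩ ⟨x', j'⟩ h
  obtain ⟨rfl, hj⟩ := List.append_inj' h rfl
  simpa using hj

structure LevelNumbers (q : ℕ) (k h : ℕ → ℕ) : Prop where
  top : h q = 1
  succ : ∀ i, 1 ≤ i → i ≤ q - 1 → h i = 1 + k i * h (i + 1)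

namespace LevelNumbers

variable {q n : ℕ} {k h : ℕ → ℕ}

theorem tail (H : LevelNumbers (q + 1) k h) :
    LevelNumbers q (fun i => k (i + 1)) (fun i => h (i + 1)) :=
  ⟨H.top, fun i hi hiq => H.succ (i + 1) (by omega) (by omega)⟩

theorem one_le_apply_one (H : LevelNumbers (n + 1) k h) : 1 ≤ h 1 := by
  rcases n with _ | n
  · exact H.top.ge
  · rw [H.succ 1 le_rfl (by omega)]
    omega

theorem apply_one (H : LevelNumbers (n + 2) k h) : h 1 = 1 + k 1 * h 2 :=
  H.succ 1 le_rfl (by omega)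

end LevelNumbers

section ValidIdx

variable {q n : ℕ} {k : ℕ → ℕ}

theorem validIdx_nil : ValidIdx q k [] :=
  ⟨Nat.zero_le _, fun _ hi => absurd hi (Nat.not_lt_zero _)⟩

theorem eq_nil_of_validIdx_one {x : List ℕ} (hx : ValidIdx 1 k x) : x = [] :=
  List.eq_nil_of_length_eq_zero (Nat.le_zero.mp hx.1)

theorem validIdx_cons {a : ℕ} {y : List ℕ} :
    ValidIdx (n + 2) k (a :: y) ↔ a < k 1 ∧ ValidIdx (n + 1) (fun i => k (i + 1)) y := by
  simp only [ValidIdx, List.length_cons, Nat.add_sub_cancel]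
  constructor
  · rintro ⟨hlen, hy⟩
    exact ⟨hy 0 (by omega), by omega, fun i hi => hy (i + 1) (by omega)⟩
  · rintro ⟨ha, hlen, hy⟩
    refine ⟨by omega, fun i hi => ?_⟩
    rcases i with _ | i
    · exact ha
    · exact hy i (by omega)

theorem validIdx_append_singleton {x : List ℕ} {j : ℕ} :
    ValidIdx q k (x ++ [j]) ↔
      ValidIdx q k x ∧ x.length + 1 ≤ q - 1 ∧ j < k (x.length + 1) := by
  simp only [ValidIdx, List.length_append, List.length_singleton]
  constructor
  · rintro ⟨hlen, hx⟩
    refine ⟨⟨by omega, fun i hi => ?_⟩, hlen, ?_⟩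
    · rw [← List.getD_append _ [j] _ _ hi]
      exact hx i (by omega)
    · simpa using hx x.length (by omega)
  · rintro ⟨⟨-, hx⟩, hlen, hj⟩
    refine ⟨hlen, fun i hi => ?_⟩
    rcases Nat.lt_or_ge i x.length with hi' | hi'
    · rw [List.getD_append _ _ _ _ hi']
      exact hx i hi'
    · obtain rfl : i = x.length := by omega
      simpa using hj

end ValidIdx

def leadCoeff (k₁ a : ℕ) (y : List ℕ) : ℤ :=
  if Even y.length then (k₁ : ℤ) - a else (a : ℤ) + 1

section LeadCoeff

variable {k₁ a a' : ℕ} {y : List ℕ}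

theorem leadCoeff_mem_Icc (y : List ℕ) (ha : a < k₁) :
    leadCoeff k₁ a y ∈ Icc 1 (k₁ : ℤ) := by
  unfold leadCoeff
  split_ifs <;> constructor <;> omega

theorem leadCoeff_inj : leadCoeff k₁ a y = leadCoeff k₁ a' y ↔ a = a' := by
  unfold leadCoeff
  split_ifs <;> omega

theorem exists_leadCoeff_eq (y : List ℕ) {B : ℤ} (hB : B ∈ Icc 1 (k₁ : ℤ)) :
    ∃ a < k₁, leadCoeff k₁ a y = B := by
  obtain ⟨hB1, hBk⟩ := hB
  unfold leadCoeff
  split_ifs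
  · exact ⟨(k₁ - B).toNat, by omega, by omega⟩
  · exact ⟨(B - 1).toNat, by omega, by omega⟩

end LeadCoeff

section RofaLabel

variable {n : ℕ} {k h : ℕ → ℕ}

theorem rofaLabel_nil : rofaLabel k h [] = 0 := by
  simp [rofaLabel]

theorem sum_range_getD_cons (f : ℕ → ℤ) (a : ℕ) (y : List ℕ) :
    ∑ i ∈ Finset.range (a :: y).length, ((a :: y).getD i 0 : ℤ) * f i =
      a * f 0 + ∑ i ∈ Finset.range y.length, (y.getD i 0 : ℤ) * f (i + 1) := by
  rw [List.length_cons, Finset.sum_range_succ', add_comm]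
  simp

theorem sum_Icc_getD_cons (f : ℕ → ℤ) (a : ℕ) (y : List ℕ) :
    ∑ i ∈ Finset.Icc 1 ((a :: y).length - 1), ((a :: y).getD i 0 : ℤ) * f i =
      ∑ i ∈ Finset.range y.length, (y.getD i 0 : ℤ) * f (i + 1) := by
  rw [List.length_cons, Nat.add_sub_cancel, ← Finset.Ico_add_one_right_eq_Icc,
    Finset.sum_Ico_eq_sum_range]
  simp [add_comm]

theorem rofaLabel_cons {a : ℕ} {y : List ℕ} (h₂ : Odd y.length → h 2 = 1 + k 2 * h 3) :
    rofaLabel k h (a :: y) =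
      leadCoeff (k 1) a y * h 2 - rofaLabel (fun i => k (i + 1)) (fun i => h (i + 1)) y := by
  rcases Nat.even_or_odd y.length with ⟨m, hm⟩ | hy
  · simp only [rofaLabel, leadCoeff]
    rw [sum_Icc_getD_cons (fun i => (h (i + 2) : ℤ))]
    simp only [List.length_cons, List.getD_cons_zero, hm, Nat.add_sub_cancel,
      show (m + m + 1 + 1) % 2 = 0 by omega, show (m + m + 1) % 2 = 1 by omega,
      show (m + m) / 2 = m by omega, Even.add_self, if_true]
    push_cast
    ring_nf
  · obtain ⟨b, z, rfl⟩ := List.exists_cons_of_length_pos hy.pos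
    obtain ⟨m, hm⟩ : 2 ∣ z.length := by simpa [Nat.odd_add_one, even_iff_two_dvd] using hy
    simp only [rofaLabel, leadCoeff]
    rw [sum_range_getD_cons (fun i => (h (i + 2) : ℤ)),
      sum_range_getD_cons (fun i => (h (i + 1 + 2) : ℤ)),
      sum_Icc_getD_cons (fun i => (h (i + 2 + 1) : ℤ))]
    simp only [List.length_cons, List.getD_cons_zero, hm, Nat.add_sub_cancel,
      show (2 * m + 1 + 1 + 1) % 2 = 1 by omega,
      show (2 * m + 1 + 1) % 2 = 0 by omega, show (2 * m + 1 + 1) / 2 = m + 1 by omega,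
      show (2 * m) / 2 = m by omega, show ¬Even (2 * m + 1) by simp, if_true, if_false]
    push_cast [h₂ hy]
    ring_nf

theorem rofaLabel_cons_of_validIdx (H : LevelNumbers (n + 2) k h) {a : ℕ} {y : List ℕ}
    (hy : ValidIdx (n + 1) (fun i => k (i + 1)) y) :
    rofaLabel k h (a :: y) =
      leadCoeff (k 1) a y * h 2 - rofaLabel (fun i => k (i + 1)) (fun i => h (i + 1)) y :=
  rofaLabel_cons fun hodd => H.succ 2 (by norm_num) (by have := hy.1; have := hodd.pos; omega)

theorem rofaLabel_cons_mem_Icc (H : LevelNumbers (n + 2) k h)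
    (hsub : MapsTo (rofaLabel (fun i => k (i + 1)) (fun i => h (i + 1)))
      {y | ValidIdx (n + 1) (fun i => k (i + 1)) y} (Ico 0 (h 2 : ℤ)))
    {a : ℕ} {y : List ℕ} (hx : ValidIdx (n + 2) k (a :: y)) :
    rofaLabel k h (a :: y) ∈ Icc 1 ((k 1 : ℤ) * h 2) := by
  obtain ⟨ha, hy⟩ := validIdx_cons.mp hx
  obtain ⟨hB1, hBk⟩ := leadCoeff_mem_Icc y ha
  obtain ⟨ht0, ht⟩ := hsub hy
  rw [rofaLabel_cons_of_validIdx H hy]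
  constructor <;> nlinarith

theorem mapsTo_rofaLabel_succ (H : LevelNumbers (n + 2) k h)
    (hsub : MapsTo (rofaLabel (fun i => k (i + 1)) (fun i => h (i + 1)))
      {y | ValidIdx (n + 1) (fun i => k (i + 1)) y} (Ico 0 (h 2 : ℤ))) :
    MapsTo (rofaLabel k h) {x | ValidIdx (n + 2) k x} (Ico 0 (h 1 : ℤ)) := by
  have h₁ : (h 1 : ℤ) = 1 + k 1 * h 2 := by exact_mod_cast H.apply_one
  rintro (_ | ⟨a, y⟩) hx
  · simp only [rofaLabel_nil, mem_Ico, le_refl, true_and]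
    exact_mod_cast H.one_le_apply_one
  · obtain ⟨hpos, hle⟩ := rofaLabel_cons_mem_Icc H hsub hx
    exact ⟨by omega, by omega⟩

theorem injOn_rofaLabel_succ (H : LevelNumbers (n + 2) k h)
    (hsub : MapsTo (rofaLabel (fun i => k (i + 1)) (fun i => h (i + 1)))
      {y | ValidIdx (n + 1) (fun i => k (i + 1)) y} (Ico 0 (h 2 : ℤ)))
    (ih : InjOn (rofaLabel (fun i => k (i + 1)) (fun i => h (i + 1)))
      {y | ValidIdx (n + 1) (fun i => k (i + 1)) y}) :
    InjOn (rofaLabel k h) {x | ValidIdx (n + 2) k x} := by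
  rintro (_ | ⟨a, y⟩) hx (_ | ⟨a', y'⟩) hx' heq
  · rfl
  · have := (rofaLabel_cons_mem_Icc H hsub hx').1
    rw [← heq, rofaLabel_nil] at this
    omega
  · have := (rofaLabel_cons_mem_Icc H hsub hx).1
    rw [heq, rofaLabel_nil] at this
    omega
  · obtain ⟨-, hy⟩ := validIdx_cons.mp hx
    obtain ⟨-, hy'⟩ := validIdx_cons.mp hx'
    rw [rofaLabel_cons_of_validIdx H hy, rofaLabel_cons_of_validIdx H hy'] at heq
    obtain ⟨hB, ht⟩ := eq_of_mul_sub_eq (hsub hy) (hsub hy') heq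
    obtain rfl := ih hy hy' ht
    rw [leadCoeff_inj.mp hB]

theorem surjOn_rofaLabel_succ (H : LevelNumbers (n + 2) k h)
    (ih : SurjOn (rofaLabel (fun i => k (i + 1)) (fun i => h (i + 1)))
      {y | ValidIdx (n + 1) (fun i => k (i + 1)) y} (Ico 0 (h 2 : ℤ))) :
    SurjOn (rofaLabel k h) {x | ValidIdx (n + 2) k x} (Ico 0 (h 1 : ℤ)) := by
  have h₁ : (h 1 : ℤ) = 1 + k 1 * h 2 := by exact_mod_cast H.apply_one
  have h₂ : (0 : ℤ) < h 2 := by exact_mod_cast H.tail.one_le_apply_one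
  rintro v ⟨hv0, hv⟩
  rcases hv0.eq_or_lt with rfl | hv0
  · exact ⟨[], validIdx_nil, rofaLabel_nil⟩
  obtain ⟨B, t, rfl, ht⟩ := exists_eq_mul_sub h₂ v
  obtain ⟨y, hy, rfl⟩ := ih ht
  obtain ⟨ht0, ht⟩ := ht
  obtain ⟨a, ha, hB⟩ := exists_leadCoeff_eq (k₁ := k 1) y (B := B)
    ⟨by nlinarith, by nlinarith⟩
  exact ⟨a :: y, validIdx_cons.mpr ⟨ha, hy⟩, by rw [rofaLabel_cons_of_validIdx H hy, hB]⟩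

end RofaLabel

theorem bijOn_rofaLabel : ∀ {n : ℕ} {k h : ℕ → ℕ}, LevelNumbers (n + 1) k h →
    BijOn (rofaLabel k h) {x | ValidIdx (n + 1) k x} (Ico 0 (h 1 : ℤ))
  | 0, k, h, H => by
    have hx : {x | ValidIdx 1 k x} = {[]} :=
      eq_singleton_iff_unique_mem.mpr ⟨validIdx_nil, fun _ => eq_nil_of_validIdx_one⟩
    have ht : Ico (0 : ℤ) 1 = {0} := by
      ext v
      simp only [mem_Ico, mem_singleton_iff]
      omega
    rw [hx, H.top, Nat.cast_one, ht]
    exact bijOn_singleton.mpr rofaLabel_nil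
  | _ + 1, _, _, H =>
    have ih := bijOn_rofaLabel H.tail
    ⟨mapsTo_rofaLabel_succ H ih.mapsTo, injOn_rofaLabel_succ H ih.mapsTo ih.injOn,
      surjOn_rofaLabel_succ H ih.surjOn⟩

def edgeDiff (k h : ℕ → ℕ) (x : List ℕ) (j : ℕ) : ℤ :=
  rofaLabel k h x - rofaLabel k h (x ++ [j])

def edgeLabel (k h : ℕ → ℕ) (e : List ℕ × ℕ) : ℤ :=
  |edgeDiff k h e.1 e.2|

-- The pair `(x, j)` stands for the edge from `x` to `x ++ [j]`, so edges correspond to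
-- non-root vertices.
def edgeSet (q : ℕ) (k : ℕ → ℕ) : Set (List ℕ × ℕ) :=
  {e | ValidIdx q k (e.1 ++ [e.2])}

def edgeCoeff (k₁ a : ℕ) (y : List ℕ) : ℤ :=
  if Even y.length then (k₁ : ℤ) - 2 * a - 1 else 2 * a + 1 - k₁

section EdgeCoeff

variable {k₁ a a' : ℕ} {y y' : List ℕ}

theorem abs_edgeCoeff_lt (ha : a < k₁) : |edgeCoeff k₁ a y| < k₁ := by
  unfold edgeCoeff
  split_ifs <;> rw [abs_lt] <;> constructor <;> omega

theorem even_edgeCoeff_sub : Even (edgeCoeff k₁ a y - edgeCoeff k₁ a' y') := by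
  unfold edgeCoeff
  rw [Int.even_iff]
  split_ifs <;> omega

theorem edgeCoeff_inj : edgeCoeff k₁ a y = edgeCoeff k₁ a' y ↔ a = a' := by
  unfold edgeCoeff
  split_ifs <;> omega

end EdgeCoeff

theorem mk_mem_edgeSet {q : ℕ} {k : ℕ → ℕ} {x : List ℕ} {j : ℕ} :
    (x, j) ∈ edgeSet q k ↔ ValidIdx q k x ∧ x.length + 1 ≤ q - 1 ∧ j < k (x.length + 1) :=
  validIdx_append_singleton

section EdgeLabel

variable {n : ℕ} {k h : ℕ → ℕ}

theorem edgeSet_one : edgeSet 1 k = ∅ :=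
  eq_empty_of_forall_notMem fun _ he => by simpa using eq_nil_of_validIdx_one he

theorem mem_edgeSet_nil {j : ℕ} : ([], j) ∈ edgeSet (n + 2) k ↔ j < k 1 := by
  simp [edgeSet, validIdx_cons, validIdx_nil]

theorem mem_edgeSet_cons {a j : ℕ} {y : List ℕ} :
    (a :: y, j) ∈ edgeSet (n + 2) k ↔
      a < k 1 ∧ (y, j) ∈ edgeSet (n + 1) (fun i => k (i + 1)) := by
  simp [edgeSet, validIdx_cons]

theorem edgeDiff_nil (j : ℕ) : edgeDiff k h [] j = -(((k 1 : ℤ) - j) * h 2) := by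
  rw [edgeDiff, List.nil_append, rofaLabel_cons (by simp), rofaLabel_nil, rofaLabel_nil]
  simp [leadCoeff]

theorem dvd_edgeDiff_nil (j : ℕ) : (h 2 : ℤ) ∣ edgeDiff k h [] j :=
  ⟨-((k 1 : ℤ) - j), by rw [edgeDiff_nil]; ring⟩

theorem edgeDiff_cons {a : ℕ} {y : List ℕ} (j : ℕ) (h₂ : h 2 = 1 + k 2 * h 3) :
    edgeDiff k h (a :: y) j =
      edgeCoeff (k 1) a y * h 2 - edgeDiff (fun i => k (i + 1)) (fun i => h (i + 1)) y j := by
  rw [edgeDiff, edgeDiff, List.cons_append, rofaLabel_cons fun _ => h₂,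
    rofaLabel_cons fun _ => h₂]
  simp only [edgeCoeff, leadCoeff, List.length_append, List.length_singleton, Nat.even_add_one]
  split_ifs <;> ring

theorem edgeDiff_cons_of_mem (H : LevelNumbers (n + 2) k h) {a j : ℕ} {y : List ℕ}
    (he : (y, j) ∈ edgeSet (n + 1) (fun i => k (i + 1))) :
    edgeDiff k h (a :: y) j =
      edgeCoeff (k 1) a y * h 2 - edgeDiff (fun i => k (i + 1)) (fun i => h (i + 1)) y j := by
  refine edgeDiff_cons j (H.succ 2 (by norm_num) ?_)
  have := he.1
  simp only [List.length_append, List.length_singleton] at this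
  omega

theorem not_dvd_edgeDiff_cons (H : LevelNumbers (n + 2) k h)
    (hsub : MapsTo (edgeLabel (fun i => k (i + 1)) (fun i => h (i + 1)))
      (edgeSet (n + 1) (fun i => k (i + 1))) (Icc 1 (h 2 - 1 : ℤ)))
    {a j : ℕ} {y : List ℕ} (he : (y, j) ∈ edgeSet (n + 1) (fun i => k (i + 1))) :
    ¬(h 2 : ℤ) ∣ edgeDiff k h (a :: y) j := by
  obtain ⟨hd₁, hd₂⟩ := hsub he
  dsimp only [edgeLabel] at hd₁ hd₂
  rw [edgeDiff_cons_of_mem H he]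
  exact not_dvd_mul_sub (by omega) (by omega)

theorem mapsTo_edgeLabel_succ (H : LevelNumbers (n + 2) k h)
    (hsub : MapsTo (edgeLabel (fun i => k (i + 1)) (fun i => h (i + 1)))
      (edgeSet (n + 1) (fun i => k (i + 1))) (Icc 1 (h 2 - 1 : ℤ))) :
    MapsTo (edgeLabel k h) (edgeSet (n + 2) k) (Icc 1 (h 1 - 1 : ℤ)) := by
  have h₁ : (h 1 : ℤ) = 1 + k 1 * h 2 := by exact_mod_cast H.apply_one
  have h₂ : (0 : ℤ) < h 2 := by exact_mod_cast H.tail.one_le_apply_one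
  rintro ⟨_ | ⟨a, y⟩, j⟩ he
  · have hj : (j : ℤ) + 1 ≤ k 1 := by exact_mod_cast mem_edgeSet_nil.mp he
    rw [edgeLabel, edgeDiff_nil, abs_neg, abs_of_pos (by nlinarith)]
    constructor <;> nlinarith
  · obtain ⟨ha, he'⟩ := mem_edgeSet_cons.mp he
    have hd := (hsub he').2
    have hc := abs_edgeCoeff_lt (y := y) ha
    refine ⟨Int.one_le_abs fun h0 => not_dvd_edgeDiff_cons H hsub he' (h0 ▸ dvd_zero _), ?_⟩
    dsimp only [edgeLabel] at hd ⊢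
    rw [edgeDiff_cons_of_mem H he']
    set c := edgeCoeff (k 1) a y
    set d := edgeDiff (fun i => k (i + 1)) (fun i => h (i + 1)) y j
    calc |c * h 2 - d| ≤ |c| * h 2 + |d| := by
          simpa [abs_mul, abs_of_pos h₂] using abs_sub (c * h 2) d
      _ ≤ (k 1 - 1) * h 2 + (h 2 - 1) := by gcongr; omega
      _ ≤ h 1 - 1 := by linarith

theorem injOn_edgeLabel_succ (H : LevelNumbers (n + 2) k h)
    (hsub : MapsTo (edgeLabel (fun i => k (i + 1)) (fun i => h (i + 1)))
      (edgeSet (n + 1) (fun i => k (i + 1))) (Icc 1 (h 2 - 1 : ℤ)))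
    (ih : InjOn (edgeLabel (fun i => k (i + 1)) (fun i => h (i + 1)))
      (edgeSet (n + 1) (fun i => k (i + 1)))) :
    InjOn (edgeLabel k h) (edgeSet (n + 2) k) := by
  have h₂ : (0 : ℤ) < h 2 := by exact_mod_cast H.tail.one_le_apply_one
  rintro ⟨_ | ⟨a, y⟩, j⟩ he ⟨_ | ⟨a', y'⟩, j'⟩ he' heq
  · have hj := mem_edgeSet_nil.mp he
    have hj' := mem_edgeSet_nil.mp he'
    simp only [edgeLabel, edgeDiff_nil, abs_neg] at heq
    rw [abs_of_pos (by nlinarith), abs_of_pos (by nlinarith)] at heq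
    have := mul_right_cancel₀ h₂.ne' heq
    rw [show j = j' by omega]
  · have hdvd : (h 2 : ℤ) ∣ edgeLabel k h (a' :: y', j') :=
      heq ▸ (dvd_abs _ _).mpr (dvd_edgeDiff_nil j)
    exact absurd ((dvd_abs _ _).mp hdvd) (not_dvd_edgeDiff_cons H hsub (mem_edgeSet_cons.mp he').2)
  · have hdvd : (h 2 : ℤ) ∣ edgeLabel k h (a :: y, j) :=
      heq ▸ (dvd_abs _ _).mpr (dvd_edgeDiff_nil j')
    exact absurd ((dvd_abs _ _).mp hdvd) (not_dvd_edgeDiff_cons H hsub (mem_edgeSet_cons.mp he).2)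
  · obtain ⟨-, he₁⟩ := mem_edgeSet_cons.mp he
    obtain ⟨-, he₂⟩ := mem_edgeSet_cons.mp he'
    obtain ⟨hd₁, hd₁'⟩ := hsub he₁
    obtain ⟨-, hd₂'⟩ := hsub he₂
    dsimp only [edgeLabel] at hd₁ hd₁' hd₂' heq
    rw [edgeDiff_cons_of_mem H he₁, edgeDiff_cons_of_mem H he₂] at heq
    rcases eq_or_eq_neg_of_abs_mul_sub_eq even_edgeCoeff_sub (by omega) (by omega) heq with
      ⟨hc, hd⟩ | ⟨-, hd⟩
    · obtain ⟨rfl, rfl⟩ := Prod.ext_iff.mp (ih he₁ he₂ (by simp only [edgeLabel, hd]))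
      rw [edgeCoeff_inj.mp hc]
    · obtain ⟨rfl, rfl⟩ :=
        Prod.ext_iff.mp (ih he₁ he₂ (by simp only [edgeLabel, hd, abs_neg]))
      have : |edgeDiff (fun i => k (i + 1)) (fun i => h (i + 1)) y j| = 0 :=
        abs_eq_zero.mpr (by linarith)
      omega

end EdgeLabel

theorem mapsTo_edgeLabel : ∀ {n : ℕ} {k h : ℕ → ℕ}, LevelNumbers (n + 1) k h →
    MapsTo (edgeLabel k h) (edgeSet (n + 1) k) (Icc 1 (h 1 - 1 : ℤ))
  | 0, _, _, _ => by
    rw [edgeSet_one]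
    exact mapsTo_empty _ _
  | _ + 1, _, _, H => mapsTo_edgeLabel_succ H (mapsTo_edgeLabel H.tail)

theorem injOn_edgeLabel : ∀ {n : ℕ} {k h : ℕ → ℕ}, LevelNumbers (n + 1) k h →
    InjOn (edgeLabel k h) (edgeSet (n + 1) k)
  | 0, _, _, _ => by
    rw [edgeSet_one]
    exact injOn_empty _
  | _ + 1, _, _, H => injOn_edgeLabel_succ H (mapsTo_edgeLabel H.tail) (injOn_edgeLabel H.tail)

theorem image_edgeSet {q : ℕ} {k : ℕ → ℕ} :
    (fun e : List ℕ × ℕ => e.1 ++ [e.2]) '' edgeSet q k = {x | ValidIdx q k x} \ {[]} := by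
  ext z
  constructor
  · rintro ⟨e, he, rfl⟩
    exact ⟨he, by simp⟩
  · rintro ⟨hz, hz'⟩
    have hz' : z ≠ [] := hz'
    exact ⟨(z.dropLast, z.getLast hz'), by simpa [edgeSet, List.dropLast_append_getLast] using hz,
      List.dropLast_append_getLast hz'⟩

section Counting

variable {n : ℕ} {k h : ℕ → ℕ}

theorem ncard_validIdx (H : LevelNumbers (n + 1) k h) :
    {x | ValidIdx (n + 1) k x}.ncard = h 1 := by
  have hb := bijOn_rofaLabel H
  rw [← hb.injOn.ncard_image, hb.image_eq, ← Finset.coe_Ico, ncard_coe_finset, Int.card_Ico]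
  simp

theorem ncard_edgeSet (H : LevelNumbers (n + 1) k h) : (edgeSet (n + 1) k).ncard = h 1 - 1 := by
  rw [← List.append_singleton_injective.injOn.ncard_image, image_edgeSet,
    ncard_sdiff_singleton_of_mem (show [] ∈ {x | ValidIdx (n + 1) k x} from validIdx_nil),
    ncard_validIdx H]

theorem bijOn_edgeLabel (H : LevelNumbers (n + 1) k h) :
    BijOn (edgeLabel k h) (edgeSet (n + 1) k) (Icc 1 (h 1 - 1 : ℤ)) := by
  have hmaps := mapsTo_edgeLabel H
  have hinj := injOn_edgeLabel H
  refine ⟨hmaps, hinj, (eq_of_subset_of_ncard_le hmaps.image_subset ?_ (finite_Icc _ _)).ge⟩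
  rw [hinj.ncard_image, ncard_edgeSet H, ← Finset.coe_Icc, ncard_coe_finset, Int.card_Icc]
  omega

end Counting

theorem rofaLabel_graceful_general (q : ℕ) (k h : ℕ → ℕ) (hq : 1 ≤ q)
    (hhq : h q = 1)
    (hrec : ∀ i, 1 ≤ i → i ≤ q - 1 → h i = 1 + k i * h (i + 1)) :
    Set.BijOn (rofaLabel k h) {x | ValidIdx q k x} (Set.Ico 0 (h 1 : ℤ)) ∧
    (∀ x x' : List ℕ, ∀ j j' : ℕ,
      ValidIdx q k x → x.length + 1 ≤ q - 1 → j < k (x.length + 1) →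
      ValidIdx q k x' → x'.length + 1 ≤ q - 1 → j' < k (x'.length + 1) →
      |rofaLabel k h x - rofaLabel k h (x ++ [j])| =
        |rofaLabel k h x' - rofaLabel k h (x' ++ [j'])| →
      x = x' ∧ j = j') ∧
    {m : ℤ | ∃ (x : List ℕ) (j : ℕ), ValidIdx q k x ∧ x.length + 1 ≤ q - 1 ∧
        j < k (x.length + 1) ∧
        m = |rofaLabel k h x - rofaLabel k h (x ++ [j])|} =
      Set.Icc 1 ((h 1 : ℤ) - 1) := by
  obtain ⟨n, rfl⟩ : ∃ n, q = n + 1 := ⟨q - 1, by omega⟩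
  have H : LevelNumbers (n + 1) k h := ⟨hhq, hrec⟩
  have hE := bijOn_edgeLabel H
  refine ⟨bijOn_rofaLabel H, fun x x' j j' hx hl hj hx' hl' hj' heq => ?_, ?_⟩
  · exact Prod.ext_iff.mp (hE.injOn (mk_mem_edgeSet.mpr ⟨hx, hl, hj⟩)
      (mk_mem_edgeSet.mpr ⟨hx', hl', hj'⟩) heq)
  · rw [← hE.image_eq]
    ext m
    constructor
    · rintro ⟨x, j, hx, hl, hj, rfl⟩
      exact ⟨(x, j), mk_mem_edgeSet.mpr ⟨hx, hl, hj⟩, rfl⟩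
    · rintro ⟨⟨x, j⟩, he, rfl⟩
      obtain ⟨hx, hl, hj⟩ := mk_mem_edgeSet.mp he
      exact ⟨x, j, hx, hl, hj, rfl⟩

/-- The labelling `f` of Theorem 1 is a graceful labelling of the rooted symmetric tree:
it is a bijection from the vertices (valid index sequences) onto `{0, ..., h 1 - 1}`, the
induced edge labels `|f(parent) - f(child)|` are pairwise distinct, and hence the set of
edge labels is exactly `{1, ..., h 1 - 1}`. -/
theorem rofaLabel_graceful (q : ℕ) (k h : ℕ → ℕ) (hq : 1 ≤ q)
    (hk : ∀ i, 1 ≤ i → i ≤ q - 1 → 1 ≤ k i)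
    (hhq : h q = 1)
    (hrec : ∀ i, 1 ≤ i → i ≤ q - 1 → h i = 1 + k i * h (i + 1)) :
    Set.BijOn (rofaLabel k h) {x | ValidIdx q k x} (Set.Ico 0 (h 1 : ℤ)) ∧
    (∀ x x' : List ℕ, ∀ j j' : ℕ,
      ValidIdx q k x → x.length + 1 ≤ q - 1 → j < k (x.length + 1) →
      ValidIdx q k x' → x'.length + 1 ≤ q - 1 → j' < k (x'.length + 1) →
      |rofaLabel k h x - rofaLabel k h (x ++ [j])| =
        |rofaLabel k h x' - rofaLabel k h (x' ++ [j'])| →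
      x = x' ∧ j = j') ∧
    {m : ℤ | ∃ (x : List ℕ) (j : ℕ), ValidIdx q k x ∧ x.length + 1 ≤ q - 1 ∧
        j < k (x.length + 1) ∧
        m = |rofaLabel k h x - rofaLabel k h (x ++ [j])|} =
      Set.Icc 1 ((h 1 : ℤ) - 1) :=
  rofaLabel_graceful_general q k h hq hhq hrec
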